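/- arXiv:math/0106252 — 3 statements merged into one kernel-verified Lean document; each statement's English description precedes it below -/
import Mathlib

section
/- Suppose 𝒱 ⊆ {V_{a,b} : n ∈ ℕ, a, b ∈ ℝⁿ} has the linking property. Then the closed star-subalgebra A of B(H) generated by 𝒰 ∪ 𝒱 is prime: the intersection of any two nonzero closed two-sided ideals of A is nonzero. -/
open scoped Classical

noncomputable section

/-- The set of real sequences. -/
abbrev X : Type := ℕ → ℝ

/-- The Hilbert space `ℓ²(X)`. -/
abbrev H : Type := lp (fun _ : X => ℂ) 2

/-- `Xa a` is the set of sequences extending the `n`-tuple `a`. -/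
def Xa {n : ℕ} (a : Fin n → ℝ) : Set X := {x | ∀ i : Fin n, x i = a i}

/-- Replace the initial segment of `x` by the tuple `a` (this is `f_{a,b}` for any `b`). -/
def repl {n : ℕ} (a : Fin n → ℝ) (x : X) : X := fun i => if h : i < n then a ⟨i, h⟩ else x i

/-- `P` is the family of orthogonal projections `P_a` onto `ℓ²(X_a)`. -/
def IsProjFamily (P : ∀ n : ℕ, (Fin n → ℝ) → (H →L[ℂ] H)) : Prop :=
  ∀ (n : ℕ) (a : Fin n → ℝ) (ξ : H) (x : X),
    P n a ξ x = if x ∈ Xa a then ξ x else 0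

/-- `V` is the family of partial isometries `V_{a,b}`. -/
def IsVFamily (V : ∀ n : ℕ, (Fin n → ℝ) → (Fin n → ℝ) → (H →L[ℂ] H)) : Prop :=
  ∀ (n : ℕ) (a b : Fin n → ℝ) (ξ : H) (x : X),
    V n a b ξ x = if x ∈ Xa b then ξ (repl a x) else 0

/-- `𝒱` has the linking property: any two tuples `α, β` have proper extensions `a, b` of a
common length `n > max m k` such that `V_{a,b} ∈ 𝒱`. -/
def LinkingProperty (V : ∀ n : ℕ, (Fin n → ℝ) → (Fin n → ℝ) → (H →L[ℂ] H))
    (𝒱 : Set (H →L[ℂ] H)) : Prop :=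
  ∀ (m k : ℕ) (α : Fin m → ℝ) (β : Fin k → ℝ),
    ∃ (n : ℕ) (hn : max m k < n) (a b : Fin n → ℝ),
      (∀ i : Fin m, a (Fin.castLE (by omega) i) = α i) ∧
      (∀ i : Fin k, b (Fin.castLE (by omega) i) = β i) ∧
      V n a b ∈ 𝒱

/-!
Each `V_{a,b}` maps `χ_x` to `χ_{f_{b,a}(x)}` if `x ∈ X_a` and to `0` otherwise, and
`P_a = V_{a,a}`. Products and adjoints of such operators are again of this form or zero, so `A`
lies in the closure of the linear span of the `V_{a,b}`. Compressing a finite combination `T₀` of them by a projection `P_a`,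
with `a` extending a long enough initial segment of `x`, gives `⟨χ_x, T₀ χ_x⟩ P_a`; for `T ∈ A`
this holds up to `2 ‖T - T₀‖`.

Given nonzero `t ∈ I` and `s ∈ J`, choose `x`, `y` where `t⋆t` and `s⋆s` have nonzero diagonal
entries `λ`, `μ`, and use the linking property to get `V_{a,b} ∈ 𝒱` with `a` extending `x` and
`b` extending `y` far enough. Then `(P_b s⋆s P_b) V_{a,b} (P_a t⋆t P_a) ∈ I ⊓ J` is close to
`μ λ V_{a,b} ≠ 0`.
-/

open scoped InnerProductSpace

section NormedAlgebra

variable {𝕜 E : Type*} [NormedField 𝕜] [NormedRing E] [NormedAlgebra 𝕜 E]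

lemma norm_mul_mul_le_of_norm_le_one {p q : E} (hp : ‖p‖ ≤ 1) (hq : ‖q‖ ≤ 1) (d : E) :
    ‖p * d * q‖ ≤ ‖d‖ :=
  calc ‖p * d * q‖ ≤ ‖p‖ * ‖d‖ * ‖q‖ := norm_mul₃_le
    _ ≤ 1 * ‖d‖ * 1 := by gcongr
    _ = ‖d‖ := by rw [one_mul, mul_one]

/-- The difference `d * v * c - (s * r) • v` has norm at most `7/9 * ‖s‖ * ‖r‖ * ‖v‖`. -/
lemma mul_mul_ne_zero_of_norm_sub_smul_le {p q v c d : E} {r s : 𝕜} (hp : ‖p‖ ≤ 1)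
    (hq : ‖q‖ ≤ 1) (hv : v ≠ 0) (hqvp : q * v * p = v) (hr : r ≠ 0) (hs : s ≠ 0)
    (hc : ‖c - r • p‖ ≤ ‖r‖ / 3) (hd : ‖d - s • q‖ ≤ ‖s‖ / 3) : d * v * c ≠ 0 := by
  obtain ⟨Dc, rfl⟩ : ∃ Dc, c = r • p + Dc := ⟨c - r • p, (add_sub_cancel _ _).symm⟩
  obtain ⟨Dd, rfl⟩ : ∃ Dd, d = s • q + Dd := ⟨d - s • q, (add_sub_cancel _ _).symm⟩
  rw [add_sub_cancel_left] at hc hd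
  have hexp : (s • q + Dd) * v * (r • p + Dc) - (s * r) • v
      = s • (q * v * Dc) + r • (Dd * v * p) + Dd * v * Dc := by
    simp only [add_mul, mul_add, smul_mul_assoc, mul_smul_comm, hqvp]
    module
  have e1 : ‖s • (q * v * Dc)‖ ≤ ‖s‖ * ‖r‖ * ‖v‖ / 3 :=
    calc ‖s • (q * v * Dc)‖ ≤ ‖s‖ * (‖q‖ * ‖v‖ * ‖Dc‖) := by
          rw [norm_smul]; gcongr; exact norm_mul₃_le
      _ ≤ ‖s‖ * (1 * ‖v‖ * (‖r‖ / 3)) := by gcongr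
      _ = ‖s‖ * ‖r‖ * ‖v‖ / 3 := by ring
  have e2 : ‖r • (Dd * v * p)‖ ≤ ‖s‖ * ‖r‖ * ‖v‖ / 3 :=
    calc ‖r • (Dd * v * p)‖ ≤ ‖r‖ * (‖Dd‖ * ‖v‖ * ‖p‖) := by
          rw [norm_smul]; gcongr; exact norm_mul₃_le
      _ ≤ ‖r‖ * (‖s‖ / 3 * ‖v‖ * 1) := by gcongr
      _ = ‖s‖ * ‖r‖ * ‖v‖ / 3 := by ring
  have e3 : ‖Dd * v * Dc‖ ≤ ‖s‖ * ‖r‖ * ‖v‖ / 9 :=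
    calc ‖Dd * v * Dc‖ ≤ ‖Dd‖ * ‖v‖ * ‖Dc‖ := norm_mul₃_le
      _ ≤ ‖s‖ / 3 * ‖v‖ * (‖r‖ / 3) := by gcongr
      _ = ‖s‖ * ‖r‖ * ‖v‖ / 9 := by ring
  have herr := hexp ▸
    norm_add₃_le (a := s • (q * v * Dc)) (b := r • (Dd * v * p)) (c := Dd * v * Dc)
  intro h0
  rw [h0, zero_sub, norm_neg, norm_smul, norm_mul] at herr
  have : 0 < ‖s‖ * ‖r‖ * ‖v‖ := by positivity
  linarith

end NormedAlgebra

section Sequences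

variable {n m : ℕ}

lemma repl_apply_of_lt (a : Fin n → ℝ) (x : X) {i : ℕ} (h : i < n) :
    repl a x i = a ⟨i, h⟩ := dif_pos h

lemma repl_apply_of_not_lt (a : Fin n → ℝ) (x : X) {i : ℕ} (h : ¬ i < n) :
    repl a x i = x i := dif_neg h

lemma repl_mem (a : Fin n → ℝ) (x : X) : repl a x ∈ Xa a :=
  fun i => repl_apply_of_lt a x i.isLt

lemma repl_eq_self_iff {a : Fin n → ℝ} {x : X} : repl a x = x ↔ x ∈ Xa a := by
  refine ⟨fun h => h ▸ repl_mem a x, fun h => funext fun i => ?_⟩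
  by_cases hi : i < n
  · rw [repl_apply_of_lt a x hi, h ⟨i, hi⟩]
  · exact repl_apply_of_not_lt a x hi

lemma repl_repl_of_le (h : m ≤ n) (a : Fin n → ℝ) (c : Fin m → ℝ) (x : X) :
    repl a (repl c x) = repl a x := by
  funext i
  by_cases hi : i < n
  · rw [repl_apply_of_lt _ _ hi, repl_apply_of_lt _ _ hi]
  · rw [repl_apply_of_not_lt _ _ hi, repl_apply_of_not_lt _ _ hi,
      repl_apply_of_not_lt _ _ (fun him => hi (him.trans_le h))]

lemma eq_repl_iff {a b : Fin n → ℝ} {x y : X} (hx : x ∈ Xa a) (hy : y ∈ Xa b) :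
    x = repl a y ↔ y = repl b x := by
  constructor <;> rintro rfl
  · rw [repl_repl_of_le le_rfl, repl_eq_self_iff.2 hy]
  · rw [repl_repl_of_le le_rfl, repl_eq_self_iff.2 hx]

def overwrite (a : Fin n → ℝ) (c : Fin m → ℝ) : Fin n → ℝ :=
  fun i => if h : (i : ℕ) < m then c ⟨i, h⟩ else a i

lemma repl_overwrite (h : m ≤ n) (a : Fin n → ℝ) (c : Fin m → ℝ) (x : X) :
    repl (overwrite a c) x = repl c (repl a x) := by
  funext i
  by_cases him : i < m
  · rw [repl_apply_of_lt c _ him, repl_apply_of_lt _ x (him.trans_le h), overwrite, dif_pos him]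
  · rw [repl_apply_of_not_lt c _ him]
    by_cases hin : i < n
    · rw [repl_apply_of_lt _ x hin, repl_apply_of_lt a x hin, overwrite, dif_neg him]
    · rw [repl_apply_of_not_lt _ x hin, repl_apply_of_not_lt a x hin]

lemma overwrite_eq_self_iff (h : m ≤ n) {a : Fin n → ℝ} {c : Fin m → ℝ} :
    overwrite a c = a ↔ a ∘ Fin.castLE h = c := by
  constructor
  · rintro hac
    funext i
    rw [Function.comp_apply, ← hac]
    exact dif_pos i.isLt
  · rintro rfl
    funext i
    unfold overwrite
    split_ifs <;> rfl

lemma overwrite_of_length_eq (a c : Fin n → ℝ) : overwrite a c = c :=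
  funext fun i => dif_pos i.isLt

lemma mem_Xa_iff_of_agree (h : m ≤ n) {a : Fin n → ℝ} {x : X}
    (hx : ∀ i : Fin m, x i = a (Fin.castLE h i)) {c : Fin m → ℝ} :
    x ∈ Xa c ↔ a ∘ Fin.castLE h = c := by
  simp only [Xa, Set.mem_ofPred_eq, hx, funext_iff, Function.comp_apply]

lemma repl_mem_Xa_iff (h : m ≤ n) (a : Fin n → ℝ) (x : X) {d : Fin m → ℝ} :
    repl a x ∈ Xa d ↔ a ∘ Fin.castLE h = d :=
  mem_Xa_iff_of_agree h fun i => repl_apply_of_lt a x (i.isLt.trans_le h)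

end Sequences

section Basis

/-- The basis vector `χ_x`. -/
def basisVec (x : X) : H := lp.single 2 x 1

lemma basisVec_apply (x y : X) : basisVec x y = if y = x then 1 else 0 := by
  rw [basisVec, lp.single_apply, Pi.single_apply]

lemma norm_basisVec (x : X) : ‖basisVec x‖ = 1 := by
  simp [basisVec, lp.norm_single]

lemma inner_basisVec_left (x : X) (f : H) : ⟪basisVec x, f⟫_ℂ = f x := by
  simp [basisVec, lp.inner_single_left]

lemma norm_inner_basisVec_le (T : H →L[ℂ] H) (x : X) :
    ‖⟪basisVec x, T (basisVec x)⟫_ℂ‖ ≤ ‖T‖ :=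
  calc ‖⟪basisVec x, T (basisVec x)⟫_ℂ‖ ≤ ‖basisVec x‖ * (‖T‖ * ‖basisVec x‖) :=
        (norm_inner_le_norm _ _).trans (by gcongr; exact T.le_opNorm _)
    _ = ‖T‖ := by rw [norm_basisVec, one_mul, mul_one]

lemma ContinuousLinearMap.ext_basisVec {T S : H →L[ℂ] H}
    (h : ∀ x, T (basisVec x) = S (basisVec x)) : T = S :=
  lp.ext_continuousLinearMap (ENNReal.ofNat_ne_top (n := 2)) fun x =>
    ContinuousLinearMap.ext_ring (h x)

lemma exists_inner_basisVec_star_mul_self_ne_zero {T : H →L[ℂ] H} (hT : T ≠ 0) :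
    ∃ x, ⟪basisVec x, (star T * T) (basisVec x)⟫_ℂ ≠ 0 := by
  obtain ⟨x, hx⟩ : ∃ x, T (basisVec x) ≠ 0 := by
    by_contra! h
    exact hT (ContinuousLinearMap.ext_basisVec fun x => by simp [h x])
  refine ⟨x, ?_⟩
  rw [mul_apply_eq_comp, ContinuousLinearMap.star_eq_adjoint,
    ContinuousLinearMap.adjoint_inner_right, inner_self_ne_zero]
  exact hx

end Basis

def Vset (V : ∀ n : ℕ, (Fin n → ℝ) → (Fin n → ℝ) → (H →L[ℂ] H)) : Set (H →L[ℂ] H) :=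
  {W | ∃ (n : ℕ) (a b : Fin n → ℝ), W = V n a b}

namespace IsVFamily

variable {V : ∀ n : ℕ, (Fin n → ℝ) → (Fin n → ℝ) → (H →L[ℂ] H)} (hV : IsVFamily V) {n m : ℕ}
include hV

lemma apply_basisVec (a b : Fin n → ℝ) (x : X) :
    V n a b (basisVec x) = if x ∈ Xa a then basisVec (repl b x) else 0 := by
  refine lp.ext (funext fun y => ?_)
  rw [hV]
  split_ifs with hy hx hx
  · simp only [basisVec_apply, eq_comm (a := repl a y), eq_repl_iff hx hy]
  · have : repl a y ≠ x := fun h => hx (h ▸ repl_mem a y)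
    simp [basisVec_apply, this]
  · have : y ≠ repl b x := fun h => hy (h ▸ repl_mem b x)
    simp [basisVec_apply, this]
  · rfl

lemma inner_basisVec_apply_basisVec (c d : Fin n → ℝ) (x : X) :
    ⟪basisVec x, V n c d (basisVec x)⟫_ℂ = if x ∈ Xa c ∧ x ∈ Xa d then 1 else 0 := by
  rw [hV.apply_basisVec]
  by_cases hc : x ∈ Xa c
  · simp [hc, inner_basisVec_left, basisVec_apply, eq_comm (a := x), repl_eq_self_iff]
  · simp [hc]

lemma ne_zero (a b : Fin n → ℝ) : V n a b ≠ 0 := by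
  intro h
  have := hV.apply_basisVec a b (repl a 0)
  rw [h, if_pos (repl_mem a 0)] at this
  simpa [norm_basisVec] using congrArg norm this

lemma star_eq (a b : Fin n → ℝ) : star (V n a b) = V n b a := by
  refine ContinuousLinearMap.ext_basisVec fun x => lp.ext (funext fun y => ?_)
  rw [← inner_basisVec_left, ContinuousLinearMap.star_eq_adjoint,
    ContinuousLinearMap.adjoint_inner_right, ← inner_conj_symm, inner_basisVec_left,
    hV.apply_basisVec, hV.apply_basisVec]
  by_cases hy : y ∈ Xa a <;> by_cases hx : x ∈ Xa b
  · simp only [hy, hx, if_true, basisVec_apply, eq_repl_iff hx hy]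
    split_ifs <;> simp
  · have : x ≠ repl b y := fun h => hx (h ▸ repl_mem b y)
    simp [hy, hx, basisVec_apply, this]
  · have : y ≠ repl a x := fun h => hy (h ▸ repl_mem a x)
    simp [hy, hx, basisVec_apply, this]
  · simp [hy, hx]

lemma mul_eq_of_le (h : m ≤ n) (a b : Fin n → ℝ) (c d : Fin m → ℝ) :
    V n a b * V m c d = if a ∘ Fin.castLE h = d then V n (overwrite a c) b else 0 := by
  refine ContinuousLinearMap.ext fun ξ => lp.ext (funext fun x => ?_)
  rw [mul_apply_eq_comp, hV, hV, repl_mem_Xa_iff h, ← repl_overwrite h]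
  split_ifs with hx
  · rw [hV, if_pos hx]
  · rfl
  · rw [hV, if_neg hx]
  · rfl

lemma mul_eq (a b c d : Fin n → ℝ) : V n a b * V n c d = if a = d then V n c b else 0 := by
  rw [hV.mul_eq_of_le le_rfl, Fin.castLE_rfl, Function.comp_id, overwrite_of_length_eq]

lemma proj_mul_eq (a b : Fin n → ℝ) : V n b b * V n a b = V n a b := by
  rw [hV.mul_eq, if_pos rfl]

lemma mul_proj_eq (a b : Fin n → ℝ) : V n a b * V n a a = V n a b := by
  rw [hV.mul_eq, if_pos rfl]

lemma star_mul_self (a b : Fin n → ℝ) : star (V n a b) * V n a b = V n a a := by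
  rw [hV.star_eq, hV.mul_eq, if_pos rfl]

lemma isStarProjection (a : Fin n → ℝ) : IsStarProjection (V n a a) :=
  ⟨hV.proj_mul_eq a a, hV.star_eq a a⟩

lemma norm_le_one (a b : Fin n → ℝ) : ‖V n a b‖ ≤ 1 := by
  have h := (hV.isStarProjection a).norm_le
  rw [← hV.star_mul_self a b, CStarRing.norm_star_mul_self (x := V n a b)] at h
  nlinarith [norm_nonneg (V n a b)]

lemma mul_mem_insert_zero (a b : Fin n → ℝ) (c d : Fin m → ℝ) :
    V n a b * V m c d ∈ insert 0 (Vset V) := by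
  have key : ∀ {n m : ℕ} (h : m ≤ n) (a b : Fin n → ℝ) (c d : Fin m → ℝ),
      V n a b * V m c d ∈ insert 0 (Vset V) := by
    intro n m h a b c d
    rw [hV.mul_eq_of_le h]
    split_ifs
    · exact Or.inr ⟨n, _, b, rfl⟩
    · exact Or.inl rfl
  rcases le_total m n with h | h
  · exact key h a b c d
  · rw [← star_star (V n a b * V m c d), star_mul, hV.star_eq, hV.star_eq]
    rcases key h d c b a with h0 | ⟨k, e, f, he⟩
    · exact Or.inl (by rw [h0, star_zero])
    · exact Or.inr ⟨k, f, e, by rw [he, hV.star_eq]⟩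

/-- `Vset V ∪ {0}` is a multiplicatively closed set containing the adjoints of its elements. -/
lemma adjoin_le_span {s : Set (H →L[ℂ] H)} (hs : s ⊆ Vset V) :
    (NonUnitalStarAlgebra.adjoin ℂ s).toSubmodule ≤ Submodule.span ℂ (Vset V) := by
  let S : Subsemigroup (H →L[ℂ] H) :=
    { carrier := insert 0 (Vset V)
      mul_mem' := by
        rintro _ _ (rfl | ⟨n, a, b, rfl⟩) (rfl | ⟨m, c, d, rfl⟩)
        all_goals first
          | exact Or.inl (zero_mul _) | exact Or.inl (mul_zero _)
          | exact hV.mul_mem_insert_zero a b c d }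
  have hsS : s ∪ star s ⊆ S := by
    rintro T (hT | hT)
    · exact Or.inr (hs hT)
    · obtain ⟨n, a, b, hT⟩ := hs hT
      exact Or.inr ⟨n, b, a, by rw [← star_star T, hT, hV.star_eq]⟩
  rw [NonUnitalStarAlgebra.adjoin_eq_span]
  exact (Submodule.span_mono (Subsemigroup.closure_le.2 hsS)).trans
    Submodule.span_insert_zero.le

lemma mul_mul_self_eq_inner_smul (h : m ≤ n) (a : Fin n → ℝ) (c d : Fin m → ℝ) {x : X}
    (hx : ∀ i : Fin m, x i = a (Fin.castLE h i)) :
    V n a a * V m c d * V n a a = ⟪basisVec x, V m c d (basisVec x)⟫_ℂ • V n a a := by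
  rw [hV.inner_basisVec_apply_basisVec, mem_Xa_iff_of_agree h hx, mem_Xa_iff_of_agree h hx,
    hV.mul_eq_of_le h]
  by_cases hd : a ∘ Fin.castLE h = d
  · rw [if_pos hd, hV.mul_eq]
    by_cases hc : a ∘ Fin.castLE h = c
    · rw [if_pos ((overwrite_eq_self_iff h).2 hc), if_pos ⟨hc, hd⟩, one_smul]
    · rw [if_neg (mt (overwrite_eq_self_iff h).1 hc), if_neg (fun h' => hc h'.1), zero_smul]
  · simp [hd]

lemma exists_mul_mul_self_eq_of_mem_span {T : H →L[ℂ] H} (hT : T ∈ Submodule.span ℂ (Vset V))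
    (x : X) : ∃ N, ∀ n (a : Fin n → ℝ), N ≤ n → (∀ i : Fin n, (i : ℕ) < N → a i = x i) →
      V n a a * T * V n a a = ⟪basisVec x, T (basisVec x)⟫_ℂ • V n a a := by
  induction hT using Submodule.span_induction with
  | mem W hW =>
    obtain ⟨m, c, d, rfl⟩ := hW
    exact ⟨m, fun n a hn ha =>
      hV.mul_mul_self_eq_inner_smul hn a c d fun i => (ha (Fin.castLE hn i) i.isLt).symm⟩
  | zero => exact ⟨0, fun n a _ _ => by simp⟩
  | add S T _ _ hS hT =>
    obtain ⟨N, hN⟩ := hS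
    obtain ⟨M, hM⟩ := hT
    refine ⟨max N M, fun n a hn ha => ?_⟩
    rw [mul_add, add_mul, add_apply, inner_add_right, add_smul,
      hN n a (le_of_max_le_left hn) fun i hi => ha i (lt_max_of_lt_left hi),
      hM n a (le_of_max_le_right hn) fun i hi => ha i (lt_max_of_lt_right hi)]
  | smul r T _ hT =>
    obtain ⟨N, hN⟩ := hT
    refine ⟨N, fun n a hn ha => ?_⟩
    rw [mul_smul_comm, smul_mul_assoc, hN n a hn ha, smul_apply,
      inner_smul_right, smul_smul]

lemma exists_norm_mul_mul_self_sub_le {T : H →L[ℂ] H}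
    (hT : T ∈ closure (Submodule.span ℂ (Vset V) : Set (H →L[ℂ] H))) (x : X) {ε : ℝ}
    (hε : 0 < ε) : ∃ N, ∀ n (a : Fin n → ℝ), N ≤ n → (∀ i : Fin n, (i : ℕ) < N → a i = x i) →
      ‖V n a a * T * V n a a - ⟪basisVec x, T (basisVec x)⟫_ℂ • V n a a‖ ≤ ε := by
  obtain ⟨T₀, hT₀, hTT₀⟩ := Metric.mem_closure_iff.1 hT (ε / 2) (half_pos hε)
  rw [dist_eq_norm] at hTT₀
  obtain ⟨N, hN⟩ := hV.exists_mul_mul_self_eq_of_mem_span hT₀ x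
  refine ⟨N, fun n a hn ha => ?_⟩
  have hsplit : V n a a * T * V n a a - ⟪basisVec x, T (basisVec x)⟫_ℂ • V n a a
      = V n a a * (T - T₀) * V n a a + ⟪basisVec x, (T₀ - T) (basisVec x)⟫_ℂ • V n a a := by
    rw [mul_sub, sub_mul, hN n a hn ha, sub_apply, inner_sub_right, sub_smul]
    abel
  rw [hsplit]
  refine (norm_add_le _ _).trans ?_
  have h1 := norm_mul_mul_le_of_norm_le_one (hV.norm_le_one a a) (hV.norm_le_one a a) (T - T₀)
  have h2 : ‖⟪basisVec x, (T₀ - T) (basisVec x)⟫_ℂ • V n a a‖ ≤ ‖T - T₀‖ := by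
    rw [norm_smul, norm_sub_rev T]
    exact mul_le_of_le_one_right (norm_nonneg _) (hV.norm_le_one a a) |>.trans
      (norm_inner_basisVec_le _ x)
  linarith

end IsVFamily

lemma IsProjFamily.eq_V {P : ∀ n : ℕ, (Fin n → ℝ) → (H →L[ℂ] H)} (hP : IsProjFamily P)
    {V : ∀ n : ℕ, (Fin n → ℝ) → (Fin n → ℝ) → (H →L[ℂ] H)} (hV : IsVFamily V)
    (n : ℕ) (a : Fin n → ℝ) : P n a = V n a a := by
  refine ContinuousLinearMap.ext fun ξ => lp.ext (funext fun x => ?_)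
  rw [hP, hV]
  split_ifs with hx
  · rw [repl_eq_self_iff.2 hx]
  · rfl

lemma mem_closure_span_of_mem_topologicalClosure {P : ∀ n : ℕ, (Fin n → ℝ) → (H →L[ℂ] H)}
    (hP : IsProjFamily P) {V : ∀ n : ℕ, (Fin n → ℝ) → (Fin n → ℝ) → (H →L[ℂ] H)}
    (hV : IsVFamily V) {𝒱 : Set (H →L[ℂ] H)} (h𝒱 : 𝒱 ⊆ Vset V) {T : H →L[ℂ] H}
    (hT : T ∈ (NonUnitalStarAlgebra.adjoin ℂ
      ({W | ∃ (n : ℕ) (a : Fin n → ℝ), W = P n a} ∪ 𝒱)).topologicalClosure) :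
    T ∈ closure (Submodule.span ℂ (Vset V) : Set (H →L[ℂ] H)) := by
  refine closure_mono (hV.adjoin_le_span ?_) hT
  rintro W (⟨n, a, rfl⟩ | hW)
  · exact ⟨n, a, a, hP.eq_V hV n a⟩
  · exact h𝒱 hW

lemma TwoSidedIdeal.exists_mem_ne_zero_of_ne_bot {R : Type*} [NonUnitalNonAssocRing R]
    {I : TwoSidedIdeal R} (hI : I ≠ ⊥) : ∃ t ∈ I, t ≠ 0 := by
  by_contra! h
  exact hI (eq_bot_iff.2 fun t ht => (TwoSidedIdeal.mem_bot R).2 (h t ht))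

/-- if `𝒱 ⊆ {V_{a,b}}` has the linking property, then the closed star-subalgebra
`A` of `B(H)` generated by `𝒰 ∪ 𝒱` is prime: the intersection of any two nonzero closed
two-sided ideals of `A` is nonzero. -/
theorem stmt2 (P : ∀ n : ℕ, (Fin n → ℝ) → (H →L[ℂ] H)) (hP : IsProjFamily P)
    (V : ∀ n : ℕ, (Fin n → ℝ) → (Fin n → ℝ) → (H →L[ℂ] H)) (hV : IsVFamily V)
    (𝒱 : Set (H →L[ℂ] H)) (h𝒱 : 𝒱 ⊆ {W | ∃ (n : ℕ) (a b : Fin n → ℝ), W = V n a b})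
    (hlink : LinkingProperty V 𝒱)
    (A : NonUnitalStarSubalgebra ℂ (H →L[ℂ] H))
    (hA : A = (NonUnitalStarAlgebra.adjoin ℂ
      ({W | ∃ (n : ℕ) (a : Fin n → ℝ), W = P n a} ∪ 𝒱)).topologicalClosure) :
    ∀ I J : TwoSidedIdeal A, IsClosed (I : Set A) → IsClosed (J : Set A) →
      I ≠ ⊥ → J ≠ ⊥ → I ⊓ J ≠ ⊥ := by
  intro I J _ _ hI hJ hIJ
  have hmemA {W} (hW : W ∈ {W | ∃ (n : ℕ) (a : Fin n → ℝ), W = P n a} ∪ 𝒱) : W ∈ A :=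
    hA ▸ NonUnitalStarSubalgebra.le_topologicalClosure _
      (NonUnitalStarAlgebra.subset_adjoin ℂ _ hW)
  have hspan (u : A) : (u : H →L[ℂ] H) ∈ closure (Submodule.span ℂ (Vset V) : Set _) :=
    mem_closure_span_of_mem_topologicalClosure hP hV h𝒱 (hA ▸ u.2)
  obtain ⟨t, htI, ht⟩ := I.exists_mem_ne_zero_of_ne_bot hI
  obtain ⟨s, hsJ, hs⟩ := J.exists_mem_ne_zero_of_ne_bot hJ
  obtain ⟨x, hx⟩ := exists_inner_basisVec_star_mul_self_ne_zero (T := t) (by exact_mod_cast ht)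
  obtain ⟨y, hy⟩ := exists_inner_basisVec_star_mul_self_ne_zero (T := s) (by exact_mod_cast hs)
  obtain ⟨N, hN⟩ := hV.exists_norm_mul_mul_self_sub_le (hspan (star t * t)) x
    (div_pos (norm_pos_iff.2 hx) three_pos)
  obtain ⟨M, hM⟩ := hV.exists_norm_mul_mul_self_sub_le (hspan (star s * s)) y
    (div_pos (norm_pos_iff.2 hy) three_pos)
  obtain ⟨n, hn, a, b, ha, hb, hab⟩ := hlink N M (fun i => x i) (fun i => y i)
  let p : A := ⟨V n a a, hmemA (Or.inl ⟨n, a, (hP.eq_V hV n a).symm⟩)⟩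
  let q : A := ⟨V n b b, hmemA (Or.inl ⟨n, b, (hP.eq_V hV n b).symm⟩)⟩
  let v : A := ⟨V n a b, hmemA (Or.inr hab)⟩
  have hw : q * (star s * s) * q * v * (p * (star t * t) * p) ∈ I ⊓ J :=
    ⟨I.mul_mem_left _ _ (I.mul_mem_right _ _ (I.mul_mem_left _ _ (I.mul_mem_left _ _ htI))),
      J.mul_mem_right _ _ (J.mul_mem_right _ _ (J.mul_mem_right _ _
        (J.mul_mem_left _ _ (J.mul_mem_left _ _ hsJ))))⟩
  rw [hIJ, TwoSidedIdeal.mem_bot] at hw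
  exact mul_mul_ne_zero_of_norm_sub_smul_le (hV.norm_le_one a a) (hV.norm_le_one b b)
    (hV.ne_zero a b) (by rw [hV.proj_mul_eq, hV.mul_proj_eq]) hx hy
    (hN n a (by omega) fun i hi => ha ⟨i, hi⟩) (hM n b (by omega) fun i hi => hb ⟨i, hi⟩)
    (congrArg Subtype.val hw)

end
end

section
/- Let n ∈ ℕ, α ∈ ℝⁿ and set r = α(n). Let Q ⊆ B(H) be a set of operators, each of the form P_a or V_{a,b}, such that a(n) ≠ r whenever P_a ∈ Q with length(a) ≥ n, and a(n) ≠ r and b(n) ≠ r whenever V_{a,b} ∈ Q with length(a) = length(b) ≥ n. Then for every element C of the closed star-subalgebra of B(H) generated by Q, the function x ↦ ⟨Cχ_x, χ_x⟩ is constant on X_α, and ⟨Cχ_y, χ_z⟩ = 0 for all distinct y, z ∈ X_α. -/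
/-!
The generators in `Q` only read or overwrite initial segments of sequences, and those of
length at least `n` only involve sequences outside the fibre `F = {x | x(n) = r}`. Hence a
self-adjoint weighted permutation operator that acts only on `F`, and there only through the
tail beyond `n`, commutes with `Q`, and so with the closed star-algebra generated by `Q` (it
lies in the bicommutant of `Q`). Two such operators finish the proof for `y, z ∈ X_α ⊆ F`:
swapping the tails of `y` and `z` exchanges `χ_y` and `χ_z`, which gives equal diagonal
entries; flipping the sign of `χ_x` for the `x ∈ F` with the tail of `z` fixes `χ_y` and
negates `χ_z`, so `⟪Cχ_y, χ_z⟫ = -⟪Cχ_y, χ_z⟫`.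
-/

open scoped Classical

noncomputable section

/-- The standard basis vector of `H` supported at `x`. -/
def chi (x : X) : H := lp.single 2 x (1 : ℂ)

open scoped lp InnerProductSpace ENNReal

namespace lp

variable {ι 𝕜 : Type*} [RCLike 𝕜] (σ : Equiv.Perm ι) (ε : ι → 𝕜)

theorem memℓp_weightedComp (hε : ∀ i, ‖ε i‖ ≤ 1) (ξ : ℓ²(ι, 𝕜)) :
    Memℓp (fun i => ε i * ξ (σ i)) 2 := by
  have hξ : Summable fun i => ‖ξ (σ i)‖ ^ (2 : ℝ≥0∞).toReal :=
    σ.summable_iff.2 ((lp.memℓp ξ).summable (by norm_num))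
  refine memℓp_gen (hξ.of_nonneg_of_le (fun _ => by positivity) fun i => ?_)
  rw [norm_mul]
  gcongr
  exact mul_le_of_le_one_left (norm_nonneg _) (hε i)

def weightedComp (hε : ∀ i, ‖ε i‖ ≤ 1) : ℓ²(ι, 𝕜) →L[𝕜] ℓ²(ι, 𝕜) :=
  LinearMap.mkContinuous
    { toFun := fun ξ => ⟨_, memℓp_weightedComp σ ε hε ξ⟩
      map_add' := fun ξ η => lp.ext <| funext fun i => mul_add (ε i) (ξ (σ i)) (η (σ i))
      map_smul' := fun c ξ => lp.ext <| funext fun i => mul_left_comm (ε i) c (ξ (σ i)) }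
    1 fun ξ => by
      rw [one_mul]
      refine lp.norm_le_of_forall_sum_le (by norm_num) (norm_nonneg _) fun s => ?_
      calc ∑ i ∈ s, ‖ε i * ξ (σ i)‖ ^ (2 : ℝ≥0∞).toReal
          ≤ ∑ i ∈ s.map σ.toEmbedding, ‖ξ i‖ ^ (2 : ℝ≥0∞).toReal := by
            rw [Finset.sum_map]
            gcongr with i
            rw [norm_mul]
            exact mul_le_of_le_one_left (norm_nonneg _) (hε i)
        _ ≤ ‖ξ‖ ^ (2 : ℝ≥0∞).toReal := lp.sum_rpow_le_norm_rpow (by norm_num) ξ _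

variable (hε : ∀ i, ‖ε i‖ ≤ 1)

@[simp]
theorem weightedComp_apply (ξ : ℓ²(ι, 𝕜)) (i : ι) :
    weightedComp σ ε hε ξ i = ε i * ξ (σ i) :=
  rfl

theorem weightedComp_single (i : ι) (c : 𝕜) :
    weightedComp σ ε hε (lp.single 2 i c) = lp.single 2 (σ.symm i) (ε (σ.symm i) * c) := by
  ext j
  by_cases hj : j = σ.symm i
  · subst hj
    simp
  · have : σ j ≠ i := fun h => hj (by rw [← h, Equiv.symm_apply_apply])
    simp [hj, this]

theorem isSelfAdjoint_weightedComp (hσ : Function.Involutive σ)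
    (hεσ : ∀ i, star (ε i) = ε (σ i)) : IsSelfAdjoint (weightedComp σ ε hε) := by
  refine ContinuousLinearMap.isSelfAdjoint_iff_isSymmetric.2 fun ξ η => ?_
  simp only [ContinuousLinearMap.coe_coe, lp.inner_eq_tsum, weightedComp_apply]
  rw [← σ.tsum_eq]
  refine tsum_congr fun i => ?_
  simp only [RCLike.inner_apply, map_mul, hσ i, ← hεσ, RCLike.star_def, RCLike.conj_conj]
  ring

theorem commute_weightedComp {W : ℓ²(ι, 𝕜) →L[𝕜] ℓ²(ι, 𝕜)} {B : Set ι} {g : ι → ι}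
    (hW : ∀ ξ i, W ξ i = if i ∈ B then ξ (g i) else 0) (hB : ∀ i, σ i ∈ B ↔ i ∈ B)
    (hσg : ∀ i ∈ B, σ (g i) = g (σ i)) (hεg : ∀ i ∈ B, ε (g i) = ε i) :
    Commute W (weightedComp σ ε hε) := by
  refine ContinuousLinearMap.ext fun ξ => lp.ext <| funext fun i => ?_
  simp only [mul_apply_eq_comp, hW, weightedComp_apply, hB]
  split_ifs with hi
  · rw [hσg i hi, hεg i hi]
  · rw [mul_zero]

end lp

theorem commute_of_mem_topologicalClosure_adjoin {R A : Type*} [CommSemiring R] [StarRing R]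
    [TopologicalSpace A] [NonUnitalSemiring A] [StarRing A] [Module R A]
    [IsSemitopologicalSemiring A] [ContinuousStar A] [ContinuousConstSMul R A]
    [IsScalarTower R A A] [SMulCommClass R A A] [StarModule R A] [T2Space A]
    {Q : Set A} {T C : A} (hT : IsSelfAdjoint T) (hQT : ∀ W ∈ Q, Commute W T)
    (hC : C ∈ (NonUnitalStarAlgebra.adjoin R Q).topologicalClosure) : Commute C T := by
  have hT' : T ∈ NonUnitalStarSubalgebra.centralizer R Q := by
    refine (NonUnitalStarSubalgebra.mem_centralizer_iff R).2 fun W hW => ⟨hQT W hW, ?_⟩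
    simpa only [hT.star_eq] using ((hQT W hW).star_star).eq
  exact ((NonUnitalStarSubalgebra.mem_centralizer_iff R).1
    (NonUnitalStarSubalgebra.topologicalClosure_adjoin_le_centralizer_centralizer R Q hC)
    T hT').1.symm

theorem IsSelfAdjoint.inner_apply_apply_of_commute {𝕜 E : Type*} [RCLike 𝕜]
    [NormedAddCommGroup E] [InnerProductSpace 𝕜 E] [CompleteSpace E] {T C : E →L[𝕜] E}
    (hT : IsSelfAdjoint T) (hCT : Commute C T) (u v : E) : ⟪C (T u), v⟫_𝕜 = ⟪C u, T v⟫_𝕜 := by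
  rw [← mul_apply_eq_comp, hCT.eq, mul_apply_eq_comp]
  exact ContinuousLinearMap.isSelfAdjoint_iff_isSymmetric.1 hT _ _

namespace RealSeq

variable (n : ℕ)

def tail (x : X) : X := fun i => x (n + i)

def glue (x t : X) : X := fun i => if i < n then x i else t (i - n)

variable {n}

theorem glue_apply_of_lt (x t : X) {i : ℕ} (hi : i < n) : glue n x t i = x i := if_pos hi

@[simp]
theorem tail_glue (x t : X) : tail n (glue n x t) = t := by
  ext i
  simp [tail, glue]

@[simp]
theorem glue_glue (x t t' : X) : glue n (glue n x t) t' = glue n x t' := by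
  ext i
  by_cases hi : i < n <;> simp [glue, hi]

@[simp]
theorem glue_tail (x : X) : glue n x (tail n x) = x := by
  ext i
  by_cases hi : i < n
  · simp [glue, hi]
  · simp [glue, tail, hi, Nat.add_sub_cancel' (not_lt.1 hi)]

theorem glue_congr {x y : X} (h : ∀ i < n, x i = y i) (t : X) : glue n x t = glue n y t := by
  ext i
  by_cases hi : i < n <;> simp [glue, hi, h]

theorem eq_of_tail_eq {x y : X} (h : ∀ i < n, x i = y i) (ht : tail n x = tail n y) : x = y := by
  rw [← glue_tail x, ← glue_tail y, ht, glue_congr h]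

variable {m : ℕ} (a : Fin m → ℝ)

theorem repl_apply_of_le (x : X) {i : ℕ} (hi : m ≤ i) : repl a x i = x i := dif_neg (by omega)

theorem tail_repl (hm : m ≤ n) (x : X) : tail n (repl a x) = tail n x := by
  ext i
  exact repl_apply_of_le a x (by omega)

theorem glue_repl (hm : m ≤ n) (x t : X) : glue n (repl a x) t = repl a (glue n x t) := by
  ext i
  by_cases hi : i < m
  · simp [glue, repl, hi, show i < n by omega]
  · by_cases hin : i < n <;> simp [glue, repl, hi, hin]


section Fibre

-- Coordinates are 0-based: `k` is the paper's `n - 1`, so `x k` is the paper's `x(n)`.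
variable (k : ℕ) (r : ℝ)

def fibreMap (π : X → X) (x : X) : X :=
  if x k = r then glue (k + 1) x (π (tail (k + 1) x)) else x

def fibreWeight (s : X → ℂ) (x : X) : ℂ :=
  if x k = r then s (tail (k + 1) x) else 1

variable {k r}

theorem fibreMap_of_eq (π : X → X) {x : X} (hx : x k = r) :
    fibreMap k r π x = glue (k + 1) x (π (tail (k + 1) x)) :=
  if_pos hx

theorem fibreMap_of_ne (π : X → X) {x : X} (hx : x k ≠ r) : fibreMap k r π x = x :=
  if_neg hx

theorem fibreWeight_of_ne (s : X → ℂ) {x : X} (hx : x k ≠ r) : fibreWeight k r s x = 1 :=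
  if_neg hx

theorem fibreMap_apply_of_lt (π : X → X) (x : X) {i : ℕ} (hi : i < k + 1) :
    fibreMap k r π x i = x i := by
  unfold fibreMap
  split_ifs
  · exact glue_apply_of_lt x _ hi
  · rfl

theorem fibreMap_apply_self (π : X → X) (x : X) : fibreMap k r π x k = x k :=
  fibreMap_apply_of_lt π x k.lt_succ_self

theorem fibreMap_id (x : X) : fibreMap k r id x = x := by
  unfold fibreMap
  split_ifs <;> simp

theorem fibreMap_fibreMap {π ρ : X → X} (h : Function.LeftInverse ρ π) (x : X) :
    fibreMap k r ρ (fibreMap k r π x) = x := by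
  by_cases hx : x k = r
  · have hx' : fibreMap k r π x k = r := (fibreMap_apply_self π x).trans hx
    rw [fibreMap_of_eq ρ hx', fibreMap_of_eq π hx, tail_glue, h, glue_glue, glue_tail]
  · rw [fibreMap_of_ne π hx, fibreMap_of_ne ρ hx]

theorem fibreWeight_fibreMap (π : X → X) (s : X → ℂ) (x : X) :
    fibreWeight k r s (fibreMap k r π x) = if x k = r then s (π (tail (k + 1) x)) else 1 := by
  split_ifs with hx
  · have hx' : fibreMap k r π x k = r := (fibreMap_apply_self π x).trans hx
    rw [fibreWeight, if_pos hx', fibreMap_of_eq π hx, tail_glue]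
  · rw [fibreMap_of_ne π hx, fibreWeight_of_ne s hx]

variable (k r) in
def fibrePerm (π : Equiv.Perm X) : Equiv.Perm X :=
  ⟨fibreMap k r π, fibreMap k r π.symm, fibreMap_fibreMap π.left_inv,
    fibreMap_fibreMap π.right_inv⟩

theorem norm_fibreWeight_le {s : X → ℂ} (hs : ∀ t, ‖s t‖ ≤ 1) (x : X) :
    ‖fibreWeight k r s x‖ ≤ 1 := by
  unfold fibreWeight
  split_ifs
  · exact hs _
  · exact norm_one.le

variable (k r) in
def fibreOp (π : Equiv.Perm X) (s : X → ℂ) (hs : ∀ t, ‖s t‖ ≤ 1) : H →L[ℂ] H :=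
  lp.weightedComp (fibrePerm k r π) (fibreWeight k r s) (norm_fibreWeight_le hs)

theorem isSelfAdjoint_fibreOp {π : Equiv.Perm X} (hπ : Function.Involutive π) {s : X → ℂ}
    (hs : ∀ t, ‖s t‖ ≤ 1) (hsπ : ∀ t, star (s t) = s (π t)) :
    IsSelfAdjoint (fibreOp k r π s hs) := by
  refine lp.isSelfAdjoint_weightedComp _ _ _ (fibreMap_fibreMap hπ) fun x => ?_
  change _ = fibreWeight k r s (fibreMap k r π x)
  rw [fibreWeight_fibreMap, fibreWeight]
  split_ifs
  · exact hsπ _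
  · exact star_one ℂ

theorem fibreOp_chi (π : Equiv.Perm X) (s : X → ℂ) (hs : ∀ t, ‖s t‖ ≤ 1) (x : X) :
    fibreOp k r π s hs (chi x) =
      fibreWeight k r s (fibreMap k r π.symm x) • chi (fibreMap k r π.symm x) := by
  unfold chi
  rw [fibreOp, lp.weightedComp_single, ← lp.single_smul, smul_eq_mul]
  rfl

end Fibre

section Generators

variable {k m : ℕ} {r : ℝ}

theorem repl_mem_Xa (a : Fin m → ℝ) (x : X) : repl a x ∈ Xa a := fun i => dif_pos i.isLt

theorem apply_ne_of_mem_Xa {a : Fin m → ℝ} (ha : ∀ h : k < m, a ⟨k, h⟩ ≠ r) (hkm : k < m)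
    {x : X} (hx : x ∈ Xa a) : x k ≠ r :=
  (hx ⟨k, hkm⟩).trans_ne (ha hkm)

theorem fibreMap_mem_Xa_iff (π : X → X) {a : Fin m → ℝ} (ha : ∀ h : k < m, a ⟨k, h⟩ ≠ r)
    (x : X) : fibreMap k r π x ∈ Xa a ↔ x ∈ Xa a := by
  by_cases hkm : k < m
  · by_cases hx : x k = r
    · have hx' : fibreMap k r π x k = r := (fibreMap_apply_self π x).trans hx
      exact iff_of_false (fun h => apply_ne_of_mem_Xa ha hkm h hx')
        (fun h => apply_ne_of_mem_Xa ha hkm h hx)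
    · rw [fibreMap_of_ne π hx]
  · refine forall_congr' fun i => ?_
    rw [fibreMap_apply_of_lt π x (by omega)]

theorem fibreMap_repl (π : X → X) {a b : Fin m → ℝ} (ha : ∀ h : k < m, a ⟨k, h⟩ ≠ r)
    (hb : ∀ h : k < m, b ⟨k, h⟩ ≠ r) {x : X} (hx : x ∈ Xa b) :
    fibreMap k r π (repl a x) = repl a (fibreMap k r π x) := by
  by_cases hkm : k < m
  · rw [fibreMap_of_ne π (apply_ne_of_mem_Xa ha hkm (repl_mem_Xa a x)),
      fibreMap_of_ne π (apply_ne_of_mem_Xa hb hkm hx)]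
  · unfold fibreMap
    rw [repl_apply_of_le a x (by omega), tail_repl a (by omega)]
    split_ifs
    · exact glue_repl a (by omega) _ _
    · rfl

theorem fibreWeight_repl (s : X → ℂ) {a b : Fin m → ℝ} (ha : ∀ h : k < m, a ⟨k, h⟩ ≠ r)
    (hb : ∀ h : k < m, b ⟨k, h⟩ ≠ r) {x : X} (hx : x ∈ Xa b) :
    fibreWeight k r s (repl a x) = fibreWeight k r s x := by
  by_cases hkm : k < m
  · rw [fibreWeight_of_ne s (apply_ne_of_mem_Xa ha hkm (repl_mem_Xa a x)),
      fibreWeight_of_ne s (apply_ne_of_mem_Xa hb hkm hx)]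
  · unfold fibreWeight
    rw [repl_apply_of_le a x (by omega), tail_repl a (by omega)]

variable (π : Equiv.Perm X) (s : X → ℂ) (hs : ∀ t, ‖s t‖ ≤ 1)

theorem commute_fibreOp_of_isProjFamily {P : ∀ n : ℕ, (Fin n → ℝ) → (H →L[ℂ] H)}
    (hP : IsProjFamily P) {a : Fin m → ℝ} (ha : ∀ h : k < m, a ⟨k, h⟩ ≠ r) :
    Commute (P m a) (fibreOp k r π s hs) :=
  lp.commute_weightedComp _ _ _ (g := id) (hP m a) (fibreMap_mem_Xa_iff π ha)
    (fun _ _ => rfl) (fun _ _ => rfl)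

theorem commute_fibreOp_of_isVFamily {V : ∀ n : ℕ, (Fin n → ℝ) → (Fin n → ℝ) → (H →L[ℂ] H)}
    (hV : IsVFamily V) {a b : Fin m → ℝ} (ha : ∀ h : k < m, a ⟨k, h⟩ ≠ r)
    (hb : ∀ h : k < m, b ⟨k, h⟩ ≠ r) : Commute (V m a b) (fibreOp k r π s hs) :=
  lp.commute_weightedComp _ _ _ (hV m a b) (fibreMap_mem_Xa_iff π hb)
    (fun _ hx => fibreMap_repl π ha hb hx) (fun _ hx => fibreWeight_repl s ha hb hx)

theorem commute_fibreOp_of_mem {P : ∀ n : ℕ, (Fin n → ℝ) → (H →L[ℂ] H)} (hP : IsProjFamily P)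
    {V : ∀ n : ℕ, (Fin n → ℝ) → (Fin n → ℝ) → (H →L[ℂ] H)} (hV : IsVFamily V)
    {Q : Set (H →L[ℂ] H)}
    (hQform : ∀ W ∈ Q, (∃ (m : ℕ) (a : Fin m → ℝ), W = P m a) ∨
      ∃ (m : ℕ) (a b : Fin m → ℝ), W = V m a b)
    (hQP : ∀ (m : ℕ) (a : Fin m → ℝ), P m a ∈ Q → ∀ h : k < m, a ⟨k, h⟩ ≠ r)
    (hQV : ∀ (m : ℕ) (a b : Fin m → ℝ), V m a b ∈ Q → ∀ h : k < m,
      a ⟨k, h⟩ ≠ r ∧ b ⟨k, h⟩ ≠ r) :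
    ∀ W ∈ Q, Commute W (fibreOp k r π s hs) := by
  intro W hW
  rcases hQform W hW with ⟨m, a, rfl⟩ | ⟨m, a, b, rfl⟩
  · exact commute_fibreOp_of_isProjFamily π s hs hP (hQP m a hW)
  · exact commute_fibreOp_of_isVFamily π s hs hV (fun h => (hQV m a b hW h).1)
      (fun h => (hQV m a b hW h).2)

end Generators

section SwapAndSign

variable (k : ℕ) (r : ℝ)

def swapOp (y z : X) : H →L[ℂ] H :=
  fibreOp k r (Equiv.swap (tail (k + 1) y) (tail (k + 1) z)) 1 fun _ => norm_one.le

def signOp (z : X) : H →L[ℂ] H :=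
  fibreOp k r (Equiv.refl X) (fun t => if t = tail (k + 1) z then -1 else 1) fun t => by
    split_ifs <;> simp

theorem isSelfAdjoint_swapOp (y z : X) : IsSelfAdjoint (swapOp k r y z) :=
  isSelfAdjoint_fibreOp (Equiv.swap_apply_self _ _) _ fun _ => star_one ℂ

theorem isSelfAdjoint_signOp (z : X) : IsSelfAdjoint (signOp k r z) :=
  isSelfAdjoint_fibreOp (fun _ => rfl) _ fun t => by
    rw [Equiv.coe_refl, id]
    split_ifs <;> simp

variable {k r} {y z : X}

theorem swapOp_comm : swapOp k r y z = swapOp k r z y := by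
  rw [swapOp, swapOp, Equiv.swap_comm]

theorem swapOp_chi_left (hy : y k = r) (hyz : ∀ i < k + 1, y i = z i) :
    swapOp k r y z (chi y) = chi z := by
  have hglue : glue (k + 1) y (tail (k + 1) z) = z := by rw [glue_congr hyz, glue_tail]
  simp [swapOp, fibreOp_chi, fibreWeight, fibreMap_of_eq _ hy, hglue]

theorem signOp_chi_of_tail_ne (htail : tail (k + 1) y ≠ tail (k + 1) z) :
    signOp k r z (chi y) = chi y := by
  simp [signOp, fibreOp_chi, fibreMap_id, fibreWeight, htail]

theorem signOp_chi_self (hz : z k = r) : signOp k r z (chi z) = -chi z := by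
  simp [signOp, fibreOp_chi, fibreMap_id, fibreWeight, hz]

variable {C : H →L[ℂ] H}

theorem inner_chi_self_eq_of_commute (hy : y k = r) (hyz : ∀ i < k + 1, y i = z i)
    (hC : Commute C (swapOp k r y z)) : ⟪C (chi y), chi y⟫_ℂ = ⟪C (chi z), chi z⟫_ℂ := by
  have hz : z k = r := (hyz k k.lt_succ_self) ▸ hy
  have hzy : swapOp k r y z (chi z) = chi y := by
    rw [swapOp_comm]
    exact swapOp_chi_left hz fun i hi => (hyz i hi).symm
  calc ⟪C (chi y), chi y⟫_ℂ = ⟪C (swapOp k r y z (chi z)), chi y⟫_ℂ := by rw [hzy]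
    _ = ⟪C (chi z), swapOp k r y z (chi y)⟫_ℂ :=
      (isSelfAdjoint_swapOp k r y z).inner_apply_apply_of_commute hC _ _
    _ = ⟪C (chi z), chi z⟫_ℂ := by rw [swapOp_chi_left hy hyz]

theorem inner_chi_eq_zero_of_commute (hz : z k = r) (hyz : ∀ i < k + 1, y i = z i) (hne : y ≠ z)
    (hC : Commute C (signOp k r z)) : ⟪C (chi y), chi z⟫_ℂ = 0 := by
  have hy : signOp k r z (chi y) = chi y :=
    signOp_chi_of_tail_ne fun ht => hne (eq_of_tail_eq hyz ht)
  have h : ⟪C (chi y), chi z⟫_ℂ = -⟪C (chi y), chi z⟫_ℂ :=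
    calc ⟪C (chi y), chi z⟫_ℂ = ⟪C (signOp k r z (chi y)), chi z⟫_ℂ := by rw [hy]
      _ = ⟪C (chi y), signOp k r z (chi z)⟫_ℂ :=
        (isSelfAdjoint_signOp k r z).inner_apply_apply_of_commute hC _ _
      _ = -⟪C (chi y), chi z⟫_ℂ := by rw [signOp_chi_self hz, inner_neg_right]
  exact self_eq_neg.1 h

end SwapAndSign

end RealSeq

open RealSeq in
/-- let `α ∈ ℝⁿ` and `r = α(n)`.  If `Q` is a set of operators, each of the form
`P_a` or `V_{a,b}`, such that the `n`-th entries of the tuples involved (when defined) are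
never `r`, then every element `C` of the closed star-subalgebra generated by `Q` has
`x ↦ ⟨Cχ_x, χ_x⟩` constant on `X_α` and `⟨Cχ_y, χ_z⟩ = 0` for distinct `y, z ∈ X_α`. -/
theorem stmt7 (P : ∀ n : ℕ, (Fin n → ℝ) → (H →L[ℂ] H)) (hP : IsProjFamily P)
    (V : ∀ n : ℕ, (Fin n → ℝ) → (Fin n → ℝ) → (H →L[ℂ] H)) (hV : IsVFamily V)
    (n : ℕ) (hn : 0 < n) (α : Fin n → ℝ) (r : ℝ) (hr : r = α ⟨n - 1, by omega⟩)
    (Q : Set (H →L[ℂ] H))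
    (hQform : ∀ W ∈ Q, (∃ (m : ℕ) (a : Fin m → ℝ), W = P m a) ∨
      ∃ (m : ℕ) (a b : Fin m → ℝ), W = V m a b)
    (hQP : ∀ (m : ℕ) (a : Fin m → ℝ), P m a ∈ Q → ∀ h : n ≤ m, a ⟨n - 1, by omega⟩ ≠ r)
    (hQV : ∀ (m : ℕ) (a b : Fin m → ℝ), V m a b ∈ Q → ∀ h : n ≤ m,
      a ⟨n - 1, by omega⟩ ≠ r ∧ b ⟨n - 1, by omega⟩ ≠ r)
    (C : H →L[ℂ] H)
    (hC : C ∈ (NonUnitalStarAlgebra.adjoin ℂ Q).topologicalClosure) :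
    (∀ y ∈ Xa α, ∀ z ∈ Xa α, (inner ℂ (C (chi y)) (chi y) : ℂ) = inner ℂ (C (chi z)) (chi z)) ∧
      (∀ y ∈ Xa α, ∀ z ∈ Xa α, y ≠ z → (inner ℂ (C (chi y)) (chi z) : ℂ) = 0) := by
  obtain ⟨k, rfl⟩ := Nat.exists_eq_add_one_of_ne_zero hn.ne'
  have hcomm : ∀ π s hs, IsSelfAdjoint (fibreOp k r π s hs) → Commute C (fibreOp k r π s hs) :=
    fun π s hs hT => commute_of_mem_topologicalClosure_adjoin hT
      (commute_fibreOp_of_mem π s hs hP hV hQform hQP hQV) hC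
  have hfibre : ∀ y ∈ Xa α, y k = r := fun y hy => (hy ⟨k, k.lt_succ_self⟩).trans hr.symm
  have hhead : ∀ y ∈ Xa α, ∀ z ∈ Xa α, ∀ i < k + 1, y i = z i :=
    fun y hy z hz i hi => (hy ⟨i, hi⟩).trans (hz ⟨i, hi⟩).symm
  exact ⟨fun y hy z hz => inner_chi_self_eq_of_commute (hfibre y hy) (hhead y hy z hz)
      (hcomm _ _ _ (isSelfAdjoint_swapOp k r y z)),
    fun y hy z hz hne => inner_chi_eq_zero_of_commute (hfibre z hz) (hhead y hy z hz) hne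
      (hcomm _ _ _ (isSelfAdjoint_signOp k r z))⟩

end
end

section
/- Let A be a C*-algebra, K a complex Hilbert space, π : A → B(K) a star-algebra homomorphism, and ξ ∈ K a cyclic vector for π (i.e., the closed linear span of {π(a)ξ : a ∈ A} together with ξ is all of K). If I is a closed two-sided ideal of A such that ⟨π(a)ξ, ξ⟩ = 0 for all a ∈ I, then π(a) = 0 for all a ∈ I. -/
/-! A vector `π b ξ` has squared norm `⟨π (b⋆ b) ξ, ξ⟩`, which vanishes since `b⋆ b ∈ I`; so `π(I)`
kills `ξ`. As `I` is a right ideal, `π a (π c ξ) = π (a c) ξ = 0` for `a ∈ I`, and `π a` then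
vanishes on a set with dense span, hence everywhere. -/

open ComplexInnerProductSpace

section StarHom

variable {A : Type*} [NonUnitalNonAssocSemiring A] [Star A] [DistribMulAction ℂ A]
  {K : Type*} [NormedAddCommGroup K] [InnerProductSpace ℂ K] [CompleteSpace K]

theorem NonUnitalStarAlgHom.inner_apply_apply (π : A →⋆ₙₐ[ℂ] (K →L[ℂ] K)) (a b : A) (x y : K) :
    ⟪π a x, π b y⟫ = ⟪π (star b * a) x, y⟫ := by
  rw [map_mul, map_star, ContinuousLinearMap.star_eq_adjoint,
    ← ContinuousLinearMap.adjoint_inner_left, mul_apply_eq_comp]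

theorem NonUnitalStarAlgHom.apply_eq_zero_of_inner_star_mul_self_eq_zero
    (π : A →⋆ₙₐ[ℂ] (K →L[ℂ] K)) {b : A} {x : K} (h : ⟪π (star b * b) x, x⟫ = 0) :
    π b x = 0 := by
  rwa [← inner_self_eq_zero (𝕜 := ℂ), π.inner_apply_apply]

end StarHom

theorem stmt9_general {A : Type*} [NonUnitalCStarAlgebra A]
    {K : Type*} [NormedAddCommGroup K] [InnerProductSpace ℂ K] [CompleteSpace K]
    (π : A →⋆ₙₐ[ℂ] (K →L[ℂ] K)) (ξ : K)
    (hcyclic : (Submodule.span ℂ (Set.range (fun a : A => π a ξ) ∪ {ξ})).topologicalClosure = ⊤)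
    (I : TwoSidedIdeal A)
    (hvanish : ∀ a ∈ I, (inner ℂ (π a ξ) ξ : ℂ) = 0) :
    ∀ a ∈ I, π a = 0 := by
  have hξ : ∀ b ∈ I, π b ξ = 0 := fun b hb =>
    π.apply_eq_zero_of_inner_star_mul_self_eq_zero (hvanish _ (I.mul_mem_left _ _ hb))
  intro a ha
  refine ContinuousLinearMap.ext_on (Submodule.dense_iff_topologicalClosure_eq_top.2 hcyclic) ?_
  rintro _ (⟨c, rfl⟩ | rfl)
  · simpa only [map_mul, mul_apply_eq_comp, zero_apply] using hξ _ (I.mul_mem_right _ _ ha)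
  · exact hξ a ha

/-- let `A` be a C*-algebra, `π : A → B(K)` a representation on a complex Hilbert
space `K`, and `ξ ∈ K` a cyclic vector for `π`.  If `I` is a closed two-sided ideal of `A` with
`⟨π(a)ξ, ξ⟩ = 0` for all `a ∈ I`, then `π(a) = 0` for all `a ∈ I`. -/
theorem stmt9 {A : Type*} [NonUnitalCStarAlgebra A]
    {K : Type*} [NormedAddCommGroup K] [InnerProductSpace ℂ K] [CompleteSpace K]
    (π : A →⋆ₙₐ[ℂ] (K →L[ℂ] K)) (ξ : K)
    (hcyclic : (Submodule.span ℂ (Set.range (fun a : A => π a ξ) ∪ {ξ})).topologicalClosure = ⊤)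
    (I : TwoSidedIdeal A) (hIclosed : IsClosed (I : Set A))
    (hvanish : ∀ a ∈ I, (inner ℂ (π a ξ) ξ : ℂ) = 0) :
    ∀ a ∈ I, π a = 0 :=
  stmt9_general π ξ hcyclic I hvanish
end
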